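/- arXiv:2605.14578 — 3 statements merged into one kernel-verified Lean document; each statement's English description precedes it below -/
import Mathlib

section
/- Let c be a cube with disjoint positive-literal set S⁺ and negative-literal set S⁻ over variables Fin h, with indicator function c(x) = 1 iff x i = 1 for i ∈ S⁺ and x i = 0 for i ∈ S⁻. For a finite set X ⊆ Fin h, define PDIV_X(c) = ∑_{S ⊆ X} (-1)^{|X|-|S|} · c(1_S), where 1_S is the characteristic vector of S. Then PDIV_X(c) = (-1)^{|X|-|S⁺|} if S⁺ ⊆ X ⊆ S⁺ ∪ S⁻, and PDIV_X(c) = 0 otherwise. -/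
/-- Indicator of a cube with positive literals `Sp` and negative literals `Sn`. -/
def cube {h : ℕ} (Sp Sn : Finset (Fin h)) (x : Fin h → Bool) : ℝ :=
  if (∀ i ∈ Sp, x i = true) ∧ (∀ i ∈ Sn, x i = false) then 1 else 0

/-- Characteristic 0/1 vector of a finite set. -/
def ind {h : ℕ} (S : Finset (Fin h)) : Fin h → Bool := fun i => i ∈ S

lemma aux_sum {α : Type*} [DecidableEq α] (x : Finset α) :
    ∑ S ∈ x.powerset, (-1:ℝ)^S.card = if x = ∅ then 1 else 0 := by
  have h := Finset.sum_powerset_neg_one_pow_card (x := x)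
  calc ∑ S ∈ x.powerset, (-1:ℝ)^S.card
      = ((∑ S ∈ x.powerset, (-1:ℤ)^S.card : ℤ) : ℝ) := by push_cast; rfl
    _ = _ := by rw [h]; split_ifs <;> simp

lemma neg_one_pow_sub (m k : ℕ) (hk : k ≤ m) :
    (-1:ℝ)^(m-k) = (-1:ℝ)^m * (-1:ℝ)^k := by
  have h1 : (-1:ℝ)^(m-k) * (-1:ℝ)^k = (-1:ℝ)^m := by
    rw [← pow_add, Nat.sub_add_cancel hk]
  have h2 : (-1:ℝ)^k * (-1:ℝ)^k = 1 := by
    rw [← pow_add]; exact Even.neg_one_pow ⟨k, rfl⟩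
  calc (-1:ℝ)^(m-k) = (-1:ℝ)^(m-k) * ((-1:ℝ)^k * (-1:ℝ)^k) := by rw [h2, mul_one]
    _ = ((-1:ℝ)^(m-k) * (-1:ℝ)^k) * (-1:ℝ)^k := by ring
    _ = (-1:ℝ)^m * (-1:ℝ)^k := by rw [h1]

theorem pdiv_of_cube {h : ℕ} (Sp Sn : Finset (Fin h)) (hdisj : Disjoint Sp Sn)
    (X : Finset (Fin h)) :
    ∑ S ∈ X.powerset, (-1 : ℝ) ^ (X.card - S.card) * cube Sp Sn (ind S)
      = if Sp ⊆ X ∧ X ⊆ Sp ∪ Sn then (-1 : ℝ) ^ (X.card - Sp.card) else 0 := by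
  classical
  have hcube : ∀ S : Finset (Fin h),
      cube Sp Sn (ind S) = if Sp ⊆ S ∧ Disjoint S Sn then 1 else 0 := by
    intro S
    have hiff : ((∀ i ∈ Sp, ind S i = true) ∧ (∀ i ∈ Sn, ind S i = false))
        ↔ (Sp ⊆ S ∧ Disjoint S Sn) := by
      simp [ind, Finset.subset_iff, Finset.disjoint_right]
    simp only [cube, hiff]
  simp only [hcube, mul_ite, mul_one, mul_zero]
  rw [Finset.sum_ite, Finset.sum_const_zero, add_zero]
  by_cases hSpX : Sp ⊆ X
  · set A := (X \ Sp) \ Sn with hA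
    have hAsub : A ⊆ X := (Finset.sdiff_subset).trans Finset.sdiff_subset
    have key : ∑ S ∈ (X.powerset.filter fun S => Sp ⊆ S ∧ Disjoint S Sn),
        (-1:ℝ)^(X.card - S.card) = ∑ T ∈ A.powerset, (-1:ℝ)^(X.card - (Sp ∪ T).card) := by
      apply Finset.sum_nbij' (fun S => S \ Sp) (fun T => Sp ∪ T)
      · intro S hS
        simp only [Finset.mem_filter, Finset.mem_powerset] at hS
        obtain ⟨hSX, hSpS, hdS⟩ := hS
        rw [Finset.mem_powerset]
        intro a ha
        rw [Finset.mem_sdiff] at ha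
        rw [hA, Finset.mem_sdiff, Finset.mem_sdiff]
        exact ⟨⟨hSX ha.1, ha.2⟩, Finset.disjoint_left.1 hdS ha.1⟩
      · intro T hT
        rw [Finset.mem_powerset] at hT
        simp only [Finset.mem_filter, Finset.mem_powerset]
        refine ⟨Finset.union_subset hSpX (hT.trans hAsub), Finset.subset_union_left, ?_⟩
        rw [Finset.disjoint_union_left]
        refine ⟨hdisj, Finset.disjoint_left.2 fun a ha hn => ?_⟩
        have := hT ha
        rw [hA, Finset.mem_sdiff] at this
        exact this.2 hn
      · intro S hS
        simp only [Finset.mem_filter, Finset.mem_powerset] at hS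
        exact Finset.union_sdiff_of_subset hS.2.1
      · intro T hT
        rw [Finset.mem_powerset] at hT
        apply Finset.union_sdiff_cancel_left
        refine Finset.disjoint_left.2 fun a haSp haT => ?_
        have := hT haT
        rw [hA, Finset.mem_sdiff, Finset.mem_sdiff] at this
        exact this.1.2 haSp
      · intro S hS
        simp only [Finset.mem_filter, Finset.mem_powerset] at hS
        rw [Finset.union_sdiff_of_subset hS.2.1]
    rw [key]
    have hTdisj : ∀ T ∈ A.powerset, Disjoint Sp T := by
      intro T hT
      rw [Finset.mem_powerset] at hT
      refine Finset.disjoint_left.2 fun a haSp haT => ?_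
      have := hT haT
      rw [hA, Finset.mem_sdiff, Finset.mem_sdiff] at this
      exact this.1.2 haSp
    have hstep : ∀ T ∈ A.powerset, (-1:ℝ)^(X.card - (Sp ∪ T).card)
        = (-1:ℝ)^(X.card - Sp.card) * (-1:ℝ)^T.card := by
      intro T hT
      have hcard : (Sp ∪ T).card = Sp.card + T.card :=
        Finset.card_union_of_disjoint (hTdisj T hT)
      have hle : Sp.card + T.card ≤ X.card := by
        rw [← hcard]
        exact Finset.card_le_card
          (Finset.union_subset hSpX ((Finset.mem_powerset.1 hT).trans hAsub))
      rw [hcard, ← Nat.sub_sub]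
      exact neg_one_pow_sub _ _ (Nat.le_sub_of_add_le (by omega))
    rw [Finset.sum_congr rfl hstep, ← Finset.mul_sum, aux_sum]
    have hAempty : (A = ∅) ↔ (X ⊆ Sp ∪ Sn) := by
      rw [hA, sdiff_sdiff]
      exact Finset.sdiff_eq_empty_iff_subset
    by_cases hX : X ⊆ Sp ∪ Sn
    · rw [if_pos (hAempty.2 hX), if_pos ⟨hSpX, hX⟩, mul_one]
    · rw [if_neg (fun he => hX (hAempty.1 he)), if_neg (fun hc => hX hc.2), mul_zero]
  · rw [if_neg (fun hc => hSpX hc.1)]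
    rw [Finset.filter_false_of_mem, Finset.sum_empty]
    intro S hS hc
    exact hSpX (hc.1.trans (Finset.mem_powerset.1 hS))
end

section
/- Let F : {0,1}^h → ℝ be expressed as a WDNF F = ∑_k w_k c_k with cubes having disjoint literal sets (S_k⁺, S_k⁻). Then for each variable i, the centered partial dependence value F(1_{{i}}) − F(1_∅) equals ∑_k w_k · m_k where m_k = 1 if S_k⁺ = {i} and i ∉ S_k⁻, m_k = −1 if i ∈ S_k⁻ and S_k⁺ = ∅, and m_k = 0 otherwise. -/
theorem cpdv_of_wdnf {h m : ℕ} (w : Fin m → ℝ) (Sp Sn : Fin m → Finset (Fin h))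
    (hdisj : ∀ k, Disjoint (Sp k) (Sn k))
    (F : (Fin h → Bool) → ℝ)
    (hF : F = fun x => ∑ k, w k * cube (Sp k) (Sn k) x)
    (i : Fin h) :
    F (ind {i}) - F (ind ∅)
      = ∑ k, w k *
          (if Sp k = {i} ∧ i ∉ Sn k then (1 : ℝ)
           else if i ∈ Sn k ∧ Sp k = ∅ then -1
           else 0) := by
  subst hF
  simp only [← Finset.sum_sub_distrib, ← mul_sub]
  refine Finset.sum_congr rfl fun k _ => ?_
  congr 1
  have hone : cube (Sp k) (Sn k) (ind {i})
      = if Sp k ⊆ {i} ∧ i ∉ Sn k then (1:ℝ) else 0 := by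
    unfold cube ind
    congr 1
    simp only [eq_iff_iff]
    constructor
    · rintro ⟨h1, h2⟩
      refine ⟨fun j hj => ?_, fun hi => by simpa using h2 i hi⟩
      have := h1 j hj
      simpa using this
    · rintro ⟨h1, h2⟩
      refine ⟨fun j hj => by simpa using h1 hj, fun j hj => ?_⟩
      simp only [decide_eq_false_iff_not, Finset.mem_singleton]
      rintro rfl; exact h2 hj
  have hzero : cube (Sp k) (Sn k) (ind ∅)
      = if Sp k = ∅ then (1:ℝ) else 0 := by
    unfold cube ind
    congr 1
    simp only [eq_iff_iff]
    constructor
    · rintro ⟨h1, _⟩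
      by_contra hne
      obtain ⟨j, hj⟩ := Finset.nonempty_iff_ne_empty.mpr hne
      simpa using h1 j hj
    · intro h; simp [h]
  rw [hone, hzero]
  have hsub : Sp k ⊆ {i} ↔ Sp k = ∅ ∨ Sp k = {i} := Finset.subset_singleton_iff
  by_cases h1 : Sp k = ∅
  · by_cases h2 : i ∈ Sn k
    · simp [h1, h2, hsub, Finset.singleton_ne_empty i]
    · simp [h1, h2, (Finset.singleton_ne_empty i).symm, hsub, Finset.singleton_ne_empty i]
  · by_cases h3 : Sp k = {i}
    · have h2 : i ∉ Sn k := fun hi =>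
        Finset.disjoint_left.mp (hdisj k) (h3 ▸ Finset.mem_singleton_self i) hi
      simp [h1, h2, h3, hsub]
    · simp [h1, h3, hsub]
end

section
/- Let F : {0,1}^h → ℝ be a WDNF formula F = ∑_k w_k c_k over cubes with disjoint literal sets (S_k⁺, S_k⁻). For every X ⊆ Fin h, PDIV_X(F) := ∑_{S ⊆ X} (-1)^{|X|-|S|} F(1_S) = ∑_k w_k · [S_k⁺ ⊆ X ⊆ S_k⁺ ∪ S_k⁻] · (-1)^{|X| - |S_k⁺|}. -/
lemma neg_pow_sub (a b : ℕ) (hb : b ≤ a) : (-1:ℝ)^(a-b) = (-1)^a * (-1)^b := by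
  rw [pow_sub₀ _ (by norm_num) hb, ← inv_pow, inv_neg, inv_one]

lemma sum_powerset_neg_one_pow_card_real {α : Type*} [DecidableEq α] (x : Finset α) :
    (∑ T ∈ x.powerset, (-1 : ℝ) ^ T.card) = if x = ∅ then 1 else 0 := by
  have := congrArg (fun z : ℤ => (z : ℝ))
    (Finset.sum_powerset_neg_one_pow_card (x := x))
  simpa using this

lemma cube_ind {h : ℕ} (Sp Sn S : Finset (Fin h)) :
    cube Sp Sn (ind S) = if Sp ⊆ S ∧ Disjoint Sn S then 1 else 0 := by
  simp [cube, ind, Finset.subset_iff, Finset.disjoint_left]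

lemma pdiv_inner_sum {h : ℕ} (Sp Sn : Finset (Fin h)) (hd : Disjoint Sp Sn)
    (X : Finset (Fin h)) :
    ∑ S ∈ X.powerset, (-1 : ℝ) ^ (X.card - S.card) * cube Sp Sn (ind S)
      = if Sp ⊆ X ∧ X ⊆ Sp ∪ Sn then (-1 : ℝ) ^ (X.card - Sp.card) else 0 := by
  simp only [cube_ind, mul_ite, mul_one, mul_zero]
  rw [← Finset.sum_filter]
  by_cases hSpX : Sp ⊆ X
  · have hkey : (X.powerset.filter fun S => Sp ⊆ S ∧ Disjoint Sn S).sum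
        (fun S => (-1:ℝ)^(X.card - S.card))
        = ∑ T ∈ (X \ (Sp ∪ Sn)).powerset, (-1:ℝ)^(X.card - (Sp ∪ T).card) := by
      apply Finset.sum_bij' (fun S _ => S \ Sp) (fun T _ => Sp ∪ T)
      · intro S hS
        simp only [Finset.mem_filter, Finset.mem_powerset] at hS ⊢
        intro x hx
        simp only [Finset.mem_sdiff, Finset.mem_union] at hx ⊢
        exact ⟨hS.1 hx.1, fun hc => hc.elim hx.2 (fun h2 => Finset.disjoint_left.mp hS.2.2 h2 hx.1)⟩
      · intro T hT
        simp only [Finset.mem_powerset] at hT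
        simp only [Finset.mem_filter, Finset.mem_powerset]
        refine ⟨Finset.union_subset hSpX (hT.trans (Finset.sdiff_subset)), Finset.subset_union_left, ?_⟩
        rw [Finset.disjoint_union_right]
        refine ⟨hd.symm, ?_⟩
        rw [Finset.disjoint_right]
        intro x hx
        have := hT hx
        simp only [Finset.mem_sdiff, Finset.mem_union] at this
        exact fun hc => this.2 (Or.inr hc)
      · intro S hS
        simp only [Finset.mem_filter] at hS
        exact Finset.union_sdiff_of_subset hS.2.1
      · intro T hT
        simp only [Finset.mem_powerset] at hT
        apply Finset.union_sdiff_cancel_left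
        rw [Finset.disjoint_right]
        intro x hx
        have := hT hx
        simp only [Finset.mem_sdiff, Finset.mem_union] at this
        exact fun hc => this.2 (Or.inl hc)
      · intro S hS
        simp only [Finset.mem_filter] at hS
        rw [Finset.union_sdiff_of_subset hS.2.1]
    rw [hkey]
    have hval : ∀ T ∈ (X \ (Sp ∪ Sn)).powerset,
        (-1:ℝ)^(X.card - (Sp ∪ T).card)
          = ((-1:ℝ)^X.card * (-1)^Sp.card) * (-1)^T.card := by
      intro T hT
      simp only [Finset.mem_powerset] at hT
      have hdT : Disjoint Sp T := by
        rw [Finset.disjoint_right]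
        intro x hx
        have := hT hx
        simp only [Finset.mem_sdiff, Finset.mem_union] at this
        exact fun hc => this.2 (Or.inl hc)
      have hsub : Sp ∪ T ⊆ X :=
        Finset.union_subset hSpX (hT.trans (Finset.sdiff_subset))
      rw [neg_pow_sub _ _ (Finset.card_le_card hsub),
        Finset.card_union_of_disjoint hdT, pow_add]
      ring
    rw [Finset.sum_congr rfl hval, ← Finset.mul_sum,
      sum_powerset_neg_one_pow_card_real]
    by_cases hX : X ⊆ Sp ∪ Sn
    · have : X \ (Sp ∪ Sn) = ∅ := Finset.sdiff_eq_empty_iff_subset.mpr hX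
      rw [if_pos this, if_pos ⟨hSpX, hX⟩, mul_one,
        neg_pow_sub _ _ (Finset.card_le_card hSpX)]
    · have : X \ (Sp ∪ Sn) ≠ ∅ := fun hc =>
        hX (Finset.sdiff_eq_empty_iff_subset.mp hc)
      rw [if_neg this, if_neg (fun hc => hX hc.2), mul_zero]
  · rw [if_neg (fun hc => hSpX hc.1)]
    apply Finset.sum_eq_zero
    intro S hS
    simp only [Finset.mem_filter, Finset.mem_powerset] at hS
    exact absurd (hS.2.1.trans hS.1) hSpX

theorem pdiv_of_wdnf {h m : ℕ} (w : Fin m → ℝ) (Sp Sn : Fin m → Finset (Fin h))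
    (hdisj : ∀ k, Disjoint (Sp k) (Sn k))
    (F : (Fin h → Bool) → ℝ)
    (hF : F = fun x => ∑ k, w k * cube (Sp k) (Sn k) x)
    (X : Finset (Fin h)) :
    ∑ S ∈ X.powerset, (-1 : ℝ) ^ (X.card - S.card) * F (ind S)
      = ∑ k, w k *
          (if Sp k ⊆ X ∧ X ⊆ Sp k ∪ Sn k
           then (-1 : ℝ) ^ (X.card - (Sp k).card) else 0) := by
  subst hF
  simp only [Finset.mul_sum]
  rw [Finset.sum_comm]
  refine Finset.sum_congr rfl fun k _ => ?_
  rw [← pdiv_inner_sum (Sp k) (Sn k) (hdisj k) X, Finset.mul_sum]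
  exact Finset.sum_congr rfl fun S _ => by ring
end
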